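/- The convexified fronthaul function majorizes the true fronthaul function, so the convexified constraint set is an inner approximation: fix a reference point (R⁰, Ω⁰) with R⁰ Hermitian positive semidefinite and Ω⁰ Hermitian positive definite (indexed by J). For Hermitian positive semidefinite R and Hermitian positive definite Ω indexed by J and nonempty S ⊆ I, define the surrogate g̃_S(R, Ω; R⁰, Ω⁰) := Σ_{i∈S} ψ((R+Ω)_{ii}, (R⁰+Ω⁰)_{ii}) − log det(Ω_S). Then g_S(R, Ω) ≤ g̃_S(R, Ω; R⁰, Ω⁰) for all such (R, Ω), with equality when (R, Ω) = (R⁰, Ω⁰). Consequently, for capacities C_i, if g̃_S(R, Ω; R⁰, Ω⁰) ≤ Σ_{i∈S} C_i then g_S(R, Ω) ≤ Σ_{i∈S} C_i. -/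

import Mathlib

/-!
`ψ(·, Y)` is the tangent of the concave function `log det` at `Y`, hence majorizes it.
Concretely, factor `Y⁻¹ = Bᴴ B` and put `Z = B X Bᴴ`; then `log det X - ψ(X, Y)` equals
`log det Z - (tr Z - dim)`, i.e. `∑ (log μ - (μ - 1))` over the eigenvalues `μ > 0` of `Z`,
which is `≤ 0`. Applying this to every diagonal block of `R + Ω` gives `g_S ≤ g̃_S`, and
at the reference point the trace term of `ψ` vanishes.
-/

open Matrix BigOperators Finset ComplexOrder

noncomputable def logDet {p : Type*} [Fintype p] [DecidableEq p] (M : Matrix p p ℂ) : ℝ :=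
  Real.log M.det.re

def blk {I : Type*} {n : I → ℕ} (M : Matrix (Σ i, Fin (n i)) (Σ i, Fin (n i)) ℂ) (i : I) :
    Matrix (Fin (n i)) (Fin (n i)) ℂ :=
  M.submatrix (fun a => ⟨i, a⟩) (fun a => ⟨i, a⟩)

def psub {I : Type*} [DecidableEq I] {n : I → ℕ}
    (M : Matrix (Σ i, Fin (n i)) (Σ i, Fin (n i)) ℂ) (S : Finset I) :
    Matrix {j : Σ i, Fin (n i) // j.1 ∈ S} {j : Σ i, Fin (n i) // j.1 ∈ S} ℂ :=
  M.submatrix Subtype.val Subtype.val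

noncomputable def gS {I : Type*} [Fintype I] [DecidableEq I] {n : I → ℕ} (S : Finset I)
    (R Ω : Matrix (Σ i, Fin (n i)) (Σ i, Fin (n i)) ℂ) : ℝ :=
  (∑ i ∈ S, logDet (blk (R + Ω) i)) - logDet (psub Ω S)

noncomputable def psi {p : Type*} [Fintype p] [DecidableEq p] (X Y : Matrix p p ℂ) : ℝ :=
  logDet Y + ((Y⁻¹ * (X - Y)).trace).re

noncomputable def gtS {I : Type*} [Fintype I] [DecidableEq I] {n : I → ℕ} (S : Finset I)
    (R Ω R0 Ω0 : Matrix (Σ i, Fin (n i)) (Σ i, Fin (n i)) ℂ) : ℝ :=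
  (∑ i ∈ S, psi (blk (R + Ω) i) (blk (R0 + Ω0) i)) - logDet (psub Ω S)

namespace Matrix

variable {p : Type*} [Fintype p] [DecidableEq p]

lemma PosDef.re_det_pos {A : Matrix p p ℂ} (hA : A.PosDef) : 0 < A.det.re :=
  (Complex.pos_iff.mp hA.det_pos).1

lemma PosDef.im_det {A : Matrix p p ℂ} (hA : A.PosDef) : A.det.im = 0 :=
  (Complex.pos_iff.mp hA.det_pos).2.symm

lemma PosDef.logDet_le_re_trace_sub_card {Z : Matrix p p ℂ} (hZ : Z.PosDef) :
    logDet Z ≤ Z.trace.re - Fintype.card p := by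
  set μ := hZ.1.eigenvalues
  have hμ : ∀ i, 0 < μ i := hZ.eigenvalues_pos
  have hdet : Z.det.re = ∏ i, μ i := by
    simp [hZ.1.det_eq_prod_eigenvalues, μ, ← Complex.ofReal_prod]
  have htrace : Z.trace.re = ∑ i, μ i := by
    simp [hZ.1.trace_eq_sum_eigenvalues, μ]
  rw [logDet, hdet, htrace, Real.log_prod fun i _ => (hμ i).ne']
  calc ∑ i, Real.log (μ i) ≤ ∑ i, (μ i - 1) :=
        sum_le_sum fun i _ => Real.log_le_sub_one_of_pos (hμ i)
    _ = ∑ i, μ i - Fintype.card p := by simp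

open scoped MatrixOrder in
lemma PosDef.logDet_le_psi {X Y : Matrix p p ℂ} (hX : X.PosDef) (hY : Y.PosDef) :
    logDet X ≤ psi X Y := by
  obtain ⟨B, hB⟩ := CStarAlgebra.nonneg_iff_eq_star_mul_self.mp hY.inv.posSemidef.nonneg
  rw [star_eq_conjTranspose] at hB
  have hB_unit : IsUnit B := by
    have := (isUnit_iff_isUnit_det _).mp hY.inv.isUnit
    rw [hB, det_mul] at this
    exact (isUnit_iff_isUnit_det B).mpr (isUnit_of_mul_isUnit_right this)
  have hY_det : IsUnit Y.det := (isUnit_iff_isUnit_det Y).mp hY.isUnit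
  set Z := B * X * Bᴴ
  have hZ : Z.PosDef := hX.mul_mul_conjTranspose_same (vecMul_injective_iff_isUnit.mpr hB_unit)
  have htrace : (Y⁻¹ * (X - Y)).trace = Z.trace - Fintype.card p := by
    rw [mul_sub, nonsing_inv_mul Y hY_det, trace_sub, trace_one, hB, mul_assoc,
      trace_mul_comm]
  have hdet : Z.det * Y.det = X.det := by
    have hinv : Y⁻¹.det * Y.det = 1 := by
      rw [← det_mul, nonsing_inv_mul Y hY_det, det_one]
    rw [hB, det_mul] at hinv
    rw [det_mul, det_mul]
    linear_combination X.det * hinv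
  have hlog : logDet Z = logDet X - logDet Y := by
    rw [logDet, logDet, logDet, eq_sub_iff_add_eq,
      ← Real.log_mul hZ.re_det_pos.ne' hY.re_det_pos.ne', ← hdet,
      Complex.mul_re, hZ.im_det, zero_mul, sub_zero]
  have := hZ.logDet_le_re_trace_sub_card
  rw [psi, htrace, Complex.sub_re, Complex.natCast_re]
  linarith

end Matrix

section Fronthaul

variable {I : Type*} {n : I → ℕ}

lemma Matrix.PosDef.blk {M : Matrix (Σ i, Fin (n i)) (Σ i, Fin (n i)) ℂ} (hM : M.PosDef)
    (i : I) : (blk M i).PosDef :=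
  hM.submatrix (sigma_mk_injective (β := fun i => Fin (n i)))

variable [Fintype I] [DecidableEq I]

lemma gS_le_gtS (S : Finset I) {R Ω R0 Ω0 : Matrix (Σ i, Fin (n i)) (Σ i, Fin (n i)) ℂ}
    (hRΩ : (R + Ω).PosDef) (hRΩ0 : (R0 + Ω0).PosDef) : gS S R Ω ≤ gtS S R Ω R0 Ω0 :=
  sub_le_sub_right (sum_le_sum fun i _ => (hRΩ.blk i).logDet_le_psi (hRΩ0.blk i)) _

lemma gtS_self (S : Finset I) (R Ω : Matrix (Σ i, Fin (n i)) (Σ i, Fin (n i)) ℂ) :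
    gtS S R Ω R Ω = gS S R Ω := by
  simp [gtS, gS, psi]

end Fronthaul

theorem surrogate_majorizes_fronthaul_general
    {I : Type*} [Fintype I] [DecidableEq I] {n : I → ℕ}
    (R0 R Ω0 Ω : Matrix (Σ i, Fin (n i)) (Σ i, Fin (n i)) ℂ)
    (hR0 : R0.PosSemidef) (hΩ0 : Ω0.PosDef)
    (hR : R.PosSemidef) (hΩ : Ω.PosDef)
    (S : Finset I) :
    gS S R Ω ≤ gtS S R Ω R0 Ω0 ∧
    gS S R0 Ω0 = gtS S R0 Ω0 R0 Ω0 ∧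
    ∀ C : I → ℝ, gtS S R Ω R0 Ω0 ≤ ∑ i ∈ S, C i → gS S R Ω ≤ ∑ i ∈ S, C i := by
  have hle : gS S R Ω ≤ gtS S R Ω R0 Ω0 :=
    gS_le_gtS S (hΩ.posSemidef_add hR) (hΩ0.posSemidef_add hR0)
  exact ⟨hle, (gtS_self S R0 Ω0).symm, fun C hC => hle.trans hC⟩

theorem surrogate_majorizes_fronthaul
    {I : Type*} [Fintype I] [DecidableEq I] {n : I → ℕ}
    (R0 R Ω0 Ω : Matrix (Σ i, Fin (n i)) (Σ i, Fin (n i)) ℂ)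
    (hR0 : R0.PosSemidef) (hΩ0 : Ω0.PosDef)
    (hR : R.PosSemidef) (hΩ : Ω.PosDef)
    (S : Finset I) (hS : S.Nonempty) :
    gS S R Ω ≤ gtS S R Ω R0 Ω0 ∧
    gS S R0 Ω0 = gtS S R0 Ω0 R0 Ω0 ∧
    ∀ C : I → ℝ, gtS S R Ω R0 Ω0 ≤ ∑ i ∈ S, C i → gS S R Ω ≤ ∑ i ∈ S, C i :=
  surrogate_majorizes_fronthaul_general R0 R Ω0 Ω hR0 hΩ0 hR hΩ S
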